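/- Let P be a set of positive integers and let n ≥ 2. The number of labeled trees on the vertex set {1,...,n} (i.e., connected acyclic simple graphs on Fin n) in which the degree of every vertex belongs to P equals (n-2)! times the coefficient of z^(n-2) in the formal power series (∑_{i ∈ P} z^(i-1)/(i-1)!)^n over ℚ. -/

import Mathlib

open scoped Classical

/-!
Fix a degree sequence `l + 1` on `n` vertices with `∑ l = n - 2`. Some vertex `u` has `l u = 0`,
i.e. is a leaf of every tree with these degrees. Deleting `u` from such a tree gives a tree on the
other `n - 1` vertices whose degree sequence drops by one at the neighbour `w` of `u`, and
attaching `u` at `w` inverts this. So the number `T(l)` of such trees satisfies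
`T(l) = ∑_w T(l - e_w)`, the recursion of the multinomial coefficient, and by induction
`T(l) * ∏ (l v)! = (n - 2)!`. Summing over the degree sequences allowed by `P` is exactly the
coefficient extraction from `(∑_{i ∈ P} z^(i-1)/(i-1)!)^n`.
-/

open Finset
open scoped Nat

@[to_additive]
lemma Fintype.prod_eq_mul_prod_subtype_compl_singleton {ι M : Type*} [Fintype ι] [DecidableEq ι]
    [CommMonoid M] (f : ι → M) (a : ι) : ∏ i, f i = f a * ∏ i : ({a}ᶜ : Set ι), f i := by
  rw [Fintype.prod_eq_mul_prod_compl a, prod_subtype (p := (· ∈ ({a}ᶜ : Set ι))) _ (by simp)]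

lemma Fintype.sum_update_add_one {ι : Type*} [Fintype ι] [DecidableEq ι] {f : ι → ℕ} {w : ι}
    {m : ℕ} (hw : f w = m + 1) : ∑ i, Function.update f w m i + 1 = ∑ i, f i := by
  rw [sum_update_of_mem (mem_univ w), sum_eq_add_sum_sdiff_singleton w f (absurd (mem_univ w)),
    hw]
  ring

lemma Fintype.prod_factorial_eq_mul_prod_factorial_update {ι : Type*} [Fintype ι] [DecidableEq ι]
    {f : ι → ℕ} {w : ι} {m : ℕ} (hw : f w = m + 1) :
    ∏ i, (f i)! = (m + 1) * ∏ i, (Function.update f w m i)! := by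
  rw [prod_eq_mul_prod_sdiff_singleton w _ (absurd (mem_univ w)),
    prod_eq_mul_prod_sdiff_singleton w _ (absurd (mem_univ w)),
    Function.update_self, hw, Nat.factorial_succ, mul_assoc]
  congr 2
  refine Finset.prod_congr rfl fun i hi => ?_
  rw [Function.update_of_ne (by simpa using hi)]

lemma PowerSeries.coeff_mk_pow {R : Type*} [CommSemiring R] (f : ℕ → R) (n m : ℕ) :
    coeff m (mk f ^ n) = ∑ l ∈ finsuppAntidiag (univ : Finset (Fin n)) m, ∏ i, f (l i) := by
  rw [← Fin.prod_const, coeff_prod]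
  simp only [coeff_mk]

namespace SimpleGraph

section addLeaf

variable {V : Type*} {G : SimpleGraph V} {u : V} {w : ({u}ᶜ : Set V)}
  {G' : SimpleGraph ({u}ᶜ : Set V)}

def addLeaf (u : V) (w : ({u}ᶜ : Set V)) (G' : SimpleGraph ({u}ᶜ : Set V)) : SimpleGraph V :=
  G'.map (Function.Embedding.subtype _) ⊔ edge u w

lemma addLeaf_adj_left {x : V} : (addLeaf u w G').Adj u x ↔ x = w := by
  have := w.2
  rw [addLeaf, sup_adj, map_adj, edge_adj]
  aesop

lemma addLeaf_adj_coe {x y : ({u}ᶜ : Set V)} : (addLeaf u w G').Adj x y ↔ G'.Adj x y := by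
  have hx : (x : V) ≠ u := x.2
  have hy : (y : V) ≠ u := y.2
  have : ¬(edge u (w : V)).Adj x y := by
    rw [edge_adj]
    tauto
  rw [addLeaf, sup_adj, or_iff_left this]
  exact map_adj_apply

lemma induce_addLeaf : (addLeaf u w G').induce {u}ᶜ = G' := by
  ext x y
  exact addLeaf_adj_coe

lemma addLeaf_induce (h : ∀ x, G.Adj u x ↔ x = w) : addLeaf u w (G.induce {u}ᶜ) = G := by
  ext x y
  by_cases hx : x = u
  · subst hx
    rw [addLeaf_adj_left, h]
  by_cases hy : y = u
  · subst hy
    rw [adj_comm, addLeaf_adj_left, adj_comm, h]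
  exact addLeaf_adj_coe (x := ⟨x, hx⟩) (y := ⟨y, hy⟩)

lemma Connected.addLeaf (h : G'.Connected) : (SimpleGraph.addLeaf u w G').Connected := by
  have hreach : ∀ x, (SimpleGraph.addLeaf u w G').Reachable x w := by
    intro x
    by_cases hx : x = u
    · subst hx
      exact Adj.reachable (addLeaf_adj_left.mpr rfl)
    · exact (h.preconnected ⟨x, hx⟩ w).map ⟨Subtype.val, addLeaf_adj_coe.mpr⟩
  exact (connected_iff _).mpr ⟨fun a b => (hreach a).trans (hreach b).symm, ⟨u⟩⟩

end addLeaf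

variable {V : Type*} [Fintype V] {G : SimpleGraph V}

lemma IsTree.sum_degrees_add_two (hG : G.IsTree) :
    ∑ v, G.degree v + 2 = 2 * Fintype.card V := by
  have := G.sum_degrees_eq_twice_card_edges
  have := hG.card_edgeFinset
  have : 0 < Fintype.card V := Fintype.card_pos_iff.mpr hG.connected.nonempty
  omega

lemma isTree_iff_connected_of_sum_degrees (h : ∑ v, G.degree v + 2 = 2 * Fintype.card V) :
    G.IsTree ↔ G.Connected := by
  refine ⟨IsTree.connected, fun hc => isTree_iff_connected_and_card.mpr ⟨hc, ?_⟩⟩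
  rw [Nat.card_eq_fintype_card, Nat.card_eq_fintype_card, ← edgeFinset_card]
  have := G.sum_degrees_eq_twice_card_edges
  omega

lemma sum_degrees_add_two_iff {l : V → ℕ} (hl : ∀ v, G.degree v = l v + 1) :
    ∑ v, G.degree v + 2 = 2 * Fintype.card V ↔ ∑ v, l v + 2 = Fintype.card V := by
  simp only [hl, sum_add_distrib, sum_const, Finset.card_univ, smul_eq_mul, mul_one]
  omega

variable [DecidableEq V]

lemma degree_induce_compl_singleton_add (G : SimpleGraph V) (u : V) (v : ({u}ᶜ : Set V)) :
    (G.induce {u}ᶜ).degree v + (if G.Adj v u then 1 else 0) = G.degree v := by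
  rw [← card_neighborFinset_eq_degree, ← card_map (.subtype _), map_neighborFinset_induce,
    ← card_neighborFinset_eq_degree]
  have : G.neighborFinset v ∩ ({u}ᶜ : Set V).toFinset = (G.neighborFinset v).erase u := by
    ext
    simp [and_comm]
  rw [this]
  split_ifs with h
  · exact card_erase_add_one (by simpa using h)
  · rw [erase_eq_of_notMem (by simpa using h), add_zero]

lemma degree_eq_iff_of_leaf {d : V → ℕ} {u : V} {w : ({u}ᶜ : Set V)}
    (h : ∀ x, G.Adj u x ↔ x = w) (hu : d u = 1) :
    (∀ v, G.degree v = d v) ↔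
      ∀ x : ({u}ᶜ : Set V), (G.induce {u}ᶜ).degree x + (if x = w then 1 else 0) = d x := by
  have hdeg_u : G.degree u = 1 :=
    degree_eq_one_iff_existsUnique_adj.mpr ⟨w, (h w).mpr rfl, fun x hx => (h x).mp hx⟩
  have hadj : ∀ x : ({u}ᶜ : Set V), G.Adj x u ↔ x = w := fun x => by
    rw [adj_comm, h, Subtype.coe_inj]
  simp_rw [← hadj, degree_induce_compl_singleton_add]
  refine ⟨fun hd x => hd x, fun hd v => ?_⟩
  by_cases hv : v = u
  · subst hv
    rw [hdeg_u, hu]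
  · exact hd ⟨v, hv⟩

theorem card_connected_degree_eq_sum_of_leaf {d : V → ℕ} {u : V} (hu : d u = 1) :
    #{G : SimpleGraph V | G.Connected ∧ ∀ v, G.degree v = d v} =
      ∑ w : ({u}ᶜ : Set V), #{G' : SimpleGraph ({u}ᶜ : Set V) | G'.Connected ∧
        ∀ x, G'.degree x + (if x = w then 1 else 0) = d x} := by
  rw [← card_sigma]
  symm
  refine card_bij (fun p _ => addLeaf u p.1 p.2) ?_ ?_ ?_
  · rintro ⟨w, G'⟩ hp
    simp only [mem_sigma, mem_univ, mem_filter, true_and] at hp ⊢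
    have hleaf : ∀ x, (addLeaf u w G').Adj u x ↔ x = w := fun x => addLeaf_adj_left
    refine ⟨hp.1.addLeaf, (degree_eq_iff_of_leaf hleaf hu).mpr ?_⟩
    convert hp.2 using 4
    exact induce_addLeaf
  · rintro ⟨w₁, G₁⟩ - ⟨w₂, G₂⟩ - h
    have hw : w₁ = w₂ :=
      Subtype.ext ((addLeaf_adj_left (G' := G₂)).mp (h ▸ addLeaf_adj_left.mpr rfl))
    subst hw
    have hG := congrArg (·.induce {u}ᶜ) h
    simp only [induce_addLeaf] at hG
    rw [hG]
  · intro G hG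
    simp only [mem_filter, mem_univ, true_and] at hG
    have hdeg_u : G.degree u = 1 := (hG.2 u).trans hu
    obtain ⟨w, hw, hw_unique⟩ := degree_eq_one_iff_existsUnique_adj.mp hdeg_u
    have hw' : w ∈ ({u}ᶜ : Set V) := hw.ne'
    have hleaf : ∀ x, G.Adj u x ↔ x = (⟨w, hw'⟩ : ({u}ᶜ : Set V)) :=
      fun x => ⟨hw_unique x, fun h => h ▸ hw⟩
    refine ⟨⟨⟨w, hw'⟩, G.induce {u}ᶜ⟩, ?_, addLeaf_induce hleaf⟩
    simp only [mem_sigma, mem_univ, mem_filter, true_and]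
    exact ⟨hG.1.induce_compl_singleton_of_degree_eq_one hdeg_u,
      (degree_eq_iff_of_leaf hleaf hu).mp hG.2⟩

lemma card_connected_degree_eq_one (hV : Fintype.card V = 2) :
    #{G : SimpleGraph V | G.Connected ∧ ∀ v, G.degree v = 1} = 1 := by
  refine card_eq_one.mpr ⟨⊤, ext fun G => ?_⟩
  simp only [mem_filter, mem_univ, true_and, mem_singleton]
  constructor
  · rintro ⟨-, hdeg⟩
    ext a b
    refine ⟨Adj.ne, fun hab => ?_⟩
    obtain ⟨c, hc, -⟩ := degree_eq_one_iff_existsUnique_adj.mp (hdeg a)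
    obtain rfl : c = b := by
      by_contra hcb
      have := Fintype.two_lt_card_iff.mpr ⟨a, b, c, hab, hc.ne, Ne.symm hcb⟩
      omega
    exact hc
  · rintro rfl
    have : Nonempty V := Fintype.card_pos_iff.mp (by omega)
    refine ⟨connected_top, fun v => ?_⟩
    have := complete_graph_degree v
    rw [hV] at this
    convert this

lemma card_connected_degree_add_ite_eq_zero [Nontrivial V] {l : V → ℕ} {w : V} (hw : l w = 0) :
    #{G : SimpleGraph V | G.Connected ∧
      ∀ x, G.degree x + (if x = w then 1 else 0) = l x + 1} = 0 := by
  refine card_eq_zero.mpr (filter_eq_empty_iff.mpr fun G _ ⟨hc, hdeg⟩ => ?_)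
  have hpos := hc.preconnected.degree_pos_of_nontrivial w
  have hdeg_w := hdeg w
  rw [if_pos rfl, hw] at hdeg_w
  omega

lemma card_connected_degree_add_ite_eq_update {l : V → ℕ} {w : V} {m : ℕ} (hw : l w = m + 1) :
    #{G : SimpleGraph V | G.Connected ∧
      ∀ x, G.degree x + (if x = w then 1 else 0) = l x + 1} =
      #{G : SimpleGraph V | G.Connected ∧ ∀ x, G.degree x = Function.update l w m x + 1} := by
  refine congrArg card (filter_congr fun G _ => and_congr_right' (forall_congr' fun x => ?_))
  by_cases hx : x = w
  · subst hx
    simp [hw]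
  · simp [hx]

/- Connectedness, unlike acyclicity, is visibly preserved by deleting and attaching a leaf; with
the degree sum fixed at `2 (n - 1)` the two notions agree (`isTree_iff_connected_of_sum_degrees`). -/
theorem card_connected_degree_mul_prod_factorial (l : V → ℕ)
    (hl : ∑ v, l v + 2 = Fintype.card V) :
    #{G : SimpleGraph V | G.Connected ∧ ∀ v, G.degree v = l v + 1} * ∏ v, (l v)! =
      (∑ v, l v)! := by
  obtain ⟨k, hk⟩ : ∃ k, ∑ v, l v = k := ⟨_, rfl⟩
  induction k generalizing V with
  | zero =>
    have hl0 : ∀ v, l v = 0 := by simpa using hk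
    simp only [hl0, zero_add, Nat.factorial_zero, prod_const_one, mul_one, sum_const_zero]
    exact card_connected_degree_eq_one (by omega)
  | succ k ih =>
    obtain ⟨u, -, hu⟩ := exists_lt_of_sum_lt (s := univ) (f := l) (g := fun _ => 1)
      (by rw [sum_const, Finset.card_univ, smul_eq_mul, mul_one]; omega)
    replace hu : l u = 0 := Nat.lt_one_iff.mp hu
    have hcard : Fintype.card ({u}ᶜ : Set V) = k + 2 := by
      rw [Fintype.card_compl_set, Set.card_singleton]
      omega
    have : Nontrivial ({u}ᶜ : Set V) := Fintype.one_lt_card_iff_nontrivial.mp (by omega)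
    have hsum : ∑ x : ({u}ᶜ : Set V), l x = k + 1 := by
      rw [← hk, Fintype.sum_eq_add_sum_subtype_compl_singleton l u, hu, zero_add]
    have hterm (w : ({u}ᶜ : Set V)) : #{G' : SimpleGraph ({u}ᶜ : Set V) | G'.Connected ∧
        ∀ x, G'.degree x + (if x = w then 1 else 0) = l x + 1} * ∏ x : ({u}ᶜ : Set V), (l x)! =
        l w * k ! := by
      rcases hw : l w with _ | m
      · rw [card_connected_degree_add_ite_eq_zero (l := fun x : ({u}ᶜ : Set V) => l x) hw,
          zero_mul, zero_mul]
      · have hsum_update := Fintype.sum_update_add_one (f := fun x : ({u}ᶜ : Set V) => l x) hw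
        rw [card_connected_degree_add_ite_eq_update (l := fun x : ({u}ᶜ : Set V) => l x) hw,
          Fintype.prod_factorial_eq_mul_prod_factorial_update
            (f := fun x : ({u}ᶜ : Set V) => l x) hw,
          mul_left_comm, ih _ (by omega) (by omega)]
        congr 2
        omega
    rw [card_connected_degree_eq_sum_of_leaf (d := fun v => l v + 1) (u := u) (by simp [hu]),
      Fintype.prod_eq_mul_prod_subtype_compl_singleton _ u, hu, Nat.factorial_zero, one_mul,
      sum_mul, sum_congr rfl fun w _ => hterm w, ← sum_mul, hsum, hk, Nat.factorial_succ]

theorem card_isTree_degree_mul_prod_factorial (l : V → ℕ) (hl : ∑ v, l v + 2 = Fintype.card V) :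
    #{G : SimpleGraph V | G.IsTree ∧ ∀ v, G.degree v = l v + 1} * ∏ v, (l v)! =
      (∑ v, l v)! := by
  rw [← card_connected_degree_mul_prod_factorial l hl]
  congr 2
  exact filter_congr fun G _ => and_congr_left fun hdeg =>
    isTree_iff_connected_of_sum_degrees ((sum_degrees_add_two_iff hdeg).mpr hl)

theorem card_isTree_degree_mem_and_degree_eq (P : Set ℕ) (l : V → ℕ)
    (hl : ∑ v, l v + 2 = Fintype.card V) :
    (#{G : SimpleGraph V | (G.IsTree ∧ ∀ v, G.degree v ∈ P) ∧ ∀ v, G.degree v = l v + 1} : ℚ) =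
      (∑ v, l v)! * ∏ v, if l v + 1 ∈ P then ((l v)! : ℚ)⁻¹ else 0 := by
  rw [Fintype.prod_ite_zero]
  by_cases hP : ∀ v, l v + 1 ∈ P
  · have hfilter : #{G : SimpleGraph V | (G.IsTree ∧ ∀ v, G.degree v ∈ P) ∧
        ∀ v, G.degree v = l v + 1} = #{G : SimpleGraph V | G.IsTree ∧ ∀ v, G.degree v = l v + 1} :=
      congrArg card <| filter_congr fun G _ => ⟨fun ⟨⟨hT, _⟩, hd⟩ => ⟨hT, hd⟩,
        fun ⟨hT, hd⟩ => ⟨⟨hT, fun v => hd v ▸ hP v⟩, hd⟩⟩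
    rw [if_pos hP, ← card_isTree_degree_mul_prod_factorial l hl, hfilter]
    push_cast
    rw [mul_assoc, ← prod_mul_distrib]
    simp [Nat.factorial_ne_zero]
  · rw [if_neg hP, mul_zero, Nat.cast_eq_zero, card_eq_zero, filter_eq_empty_iff]
    exact fun G _ ⟨⟨_, hdegP⟩, hdeg⟩ => hP fun v => hdeg v ▸ hdegP v

theorem card_isTree_degree_mem (P : Set ℕ) (hV : 2 ≤ Fintype.card V) :
    (#{G : SimpleGraph V | G.IsTree ∧ ∀ v, G.degree v ∈ P} : ℚ) =
      (Fintype.card V - 2)! * ∑ l ∈ finsuppAntidiag (univ : Finset V) (Fintype.card V - 2),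
        ∏ v, if l v + 1 ∈ P then ((l v)! : ℚ)⁻¹ else 0 := by
  have : Nontrivial V := Fintype.one_lt_card_iff_nontrivial.mp (by omega)
  let degMinusOne (G : SimpleGraph V) : V →₀ ℕ :=
    Finsupp.equivFunOnFinite.symm fun v => G.degree v - 1
  have hdeg {G : SimpleGraph V} (hG : G.IsTree) (l : V →₀ ℕ) :
      degMinusOne G = l ↔ ∀ v, G.degree v = l v + 1 := by
    have hpos := hG.connected.preconnected.degree_pos_of_nontrivial
    simp only [degMinusOne, Finsupp.ext_iff, Finsupp.coe_equivFunOnFinite_symm]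
    exact forall_congr' fun v => by have := hpos v; omega
  have hmaps : ∀ G ∈ ({G | G.IsTree ∧ ∀ v, G.degree v ∈ P} : Finset (SimpleGraph V)),
      degMinusOne G ∈ finsuppAntidiag univ (Fintype.card V - 2) := by
    intro G hG
    simp only [mem_filter, mem_univ, true_and] at hG
    have := (sum_degrees_add_two_iff ((hdeg hG.1 _).mp rfl)).mp hG.1.sum_degrees_add_two
    refine mem_finsuppAntidiag.mpr ⟨?_, subset_univ _⟩
    change ∑ v, degMinusOne G v = _
    omega
  rw [card_eq_sum_card_fiberwise hmaps, Nat.cast_sum, mul_sum]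
  refine sum_congr rfl fun l hl => ?_
  have hsum : ∑ v, l v = Fintype.card V - 2 := (mem_finsuppAntidiag.mp hl).1
  rw [filter_filter, ← hsum, ← card_isTree_degree_mem_and_degree_eq P l (by omega)]
  exact congrArg _ (congrArg _ (filter_congr fun G _ => and_congr_right fun h => hdeg h.1 l))

end SimpleGraph

theorem labeled_trees_with_degrees_in_P_general (P : Set ℕ)
    (n : ℕ) (hn : 2 ≤ n) :
    ((Finset.univ.filter (fun G : SimpleGraph (Fin n) =>
        (G.Connected ∧ G.IsAcyclic) ∧ ∀ v : Fin n, G.degree v ∈ P)).card : ℚ) =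
      (Nat.factorial (n - 2) : ℚ) *
        PowerSeries.coeff (R := ℚ) (n - 2)
          ((PowerSeries.mk fun m : ℕ =>
              if m + 1 ∈ P then (1 : ℚ) / (Nat.factorial m) else 0) ^ n) := by
  have h := SimpleGraph.card_isTree_degree_mem (V := Fin n) P (by simpa using hn)
  simp only [Fintype.card_fin, SimpleGraph.isTree_iff] at h
  rw [h, PowerSeries.coeff_mk_pow]
  simp only [one_div]

/-- For a set `P` of positive integers and `n ≥ 2`, the number of
labeled trees on `Fin n` (connected acyclic simple graphs) all of whose vertex degrees
lie in `P` equals `(n-2)!` times the coefficient of `z^(n-2)` in the formal power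
series `(∑_{i ∈ P} z^(i-1)/(i-1)!)^n` over `ℚ`.  The series is encoded by its
coefficients: the coefficient of `z^m` is `1/m!` if `m+1 ∈ P` and `0` otherwise. -/
theorem labeled_trees_with_degrees_in_P (P : Set ℕ) (hP : ∀ i ∈ P, 0 < i)
    (n : ℕ) (hn : 2 ≤ n) :
    ((Finset.univ.filter (fun G : SimpleGraph (Fin n) =>
        (G.Connected ∧ G.IsAcyclic) ∧ ∀ v : Fin n, G.degree v ∈ P)).card : ℚ) =
      (Nat.factorial (n - 2) : ℚ) *
        PowerSeries.coeff (R := ℚ) (n - 2)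
          ((PowerSeries.mk fun m : ℕ =>
              if m + 1 ∈ P then (1 : ℚ) / (Nat.factorial m) else 0) ^ n) :=
  labeled_trees_with_degrees_in_P_general P n hn
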